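/- Let τ(t) and φ_n(t,u) (n ∈ ℤ) be smooth real functions. The determining equation for Lie point symmetries of the Toda lattice ü_n = exp(u_{n-1} − u_n) − exp(u_n − u_{n+1}) holds identically (for all n ∈ ℤ and all real values of t, u_{n-1}, u_n, u_{n+1}, v_{n-1}, v_n, v_{n+1}) if and only if there exist constants c₁, c₂, c₃, c₄ such that τ(t) = c₁ + c₄ t and φ_n(t,u) = c₂ t + c₃ + 2 c₄ n. Equivalently, the Lie point symmetry algebra of the Toda lattice is four-dimensional, spanned by X₁ = ∂_t, X₂ = t∂_{u_n}, X₃ = ∂_{u_n}, X₄ = t∂_t + 2n∂_{u_n}. -/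

import Mathlib

/-- The right-hand side of the Toda lattice:
`fₙ(u_{n-1}, u_n, u_{n+1}) = exp(uₙ₋₁ − uₙ) − exp(uₙ − uₙ₊₁)`,
with arguments `(a, b, c) = (u_{n-1}, u_n, u_{n+1})`. -/
noncomputable def todaF (a b c : ℝ) : ℝ := Real.exp (a - b) - Real.exp (b - c)

/-- The determining equation for Lie point symmetries of the Toda lattice
`üₙ = exp(uₙ₋₁ − uₙ) − exp(uₙ − uₙ₊₁)`, for a commuting flow
`u_{n,λ} = φₙ(t,uₙ) − τ(t) u̇ₙ`, required to hold identically in the independent jet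
variables `t, uₙ₋₁, uₙ, uₙ₊₁, vₙ₋₁, vₙ, vₙ₊₁` (the `v`'s stand for `u̇`). -/
def TodaDetEq (τ : ℝ → ℝ) (φ : ℤ → ℝ → ℝ → ℝ) : Prop :=
  ∀ (n : ℤ) (t um u0 up vm v0 vp : ℝ),
    (deriv (fun z => todaF z u0 up) um) * (φ (n - 1) t um + (τ t - τ t) * vm) +
      (deriv (fun z => todaF um z up) u0) * (φ n t u0 + (τ t - τ t) * v0) +
      (deriv (fun z => todaF um u0 z) up) * (φ (n + 1) t up + (τ t - τ t) * vp) -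
      deriv (deriv (fun s => φ n s u0)) t +
      (-2 * deriv (fun s => deriv (fun z => φ n s z) u0) t + deriv (deriv τ) t) * v0 -
      deriv (deriv (fun z => φ n t z)) u0 * v0 ^ 2 +
      (2 * deriv τ t - deriv (fun z => φ n t z) u0) * todaF um u0 up = 0

lemma todaF_d1 (a b c : ℝ) : deriv (fun z => todaF z b c) a = Real.exp (a - b) := by
  have h : HasDerivAt (fun z => todaF z b c) (Real.exp (a - b)) a := by
    have h1 : HasDerivAt (fun z : ℝ => z - b) 1 a := (hasDerivAt_id a).sub_const b
    have h2 := h1.exp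
    simpa [todaF] using h2.sub_const (Real.exp (b - c))
  exact h.deriv

lemma todaF_d2 (a b c : ℝ) :
    deriv (fun z => todaF a z c) b = -Real.exp (a - b) - Real.exp (b - c) := by
  have h : HasDerivAt (fun z => todaF a z c) (-Real.exp (a - b) - Real.exp (b - c)) b := by
    have h1 : HasDerivAt (fun z : ℝ => a - z) (-1) b := (hasDerivAt_id b).const_sub a
    have h2 : HasDerivAt (fun z : ℝ => z - c) 1 b := (hasDerivAt_id b).sub_const c
    have := h1.exp.sub h2.exp
    simpa [todaF, mul_comm, Pi.sub_def] using this
  exact h.deriv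

lemma todaF_d3 (a b c : ℝ) : deriv (fun z => todaF a b z) c = Real.exp (b - c) := by
  have h : HasDerivAt (fun z => todaF a b z) (Real.exp (b - c)) c := by
    have h1 : HasDerivAt (fun z : ℝ => b - z) (-1) c := (hasDerivAt_id c).const_sub b
    have := (h1.exp).const_sub (Real.exp (a - b))
    simpa [todaF, sub_eq_add_neg] using this
  exact h.deriv

lemma linear_of_deriv_const {f : ℝ → ℝ} (hf : Differentiable ℝ f) {c : ℝ}
    (h : ∀ x, deriv f x = c) (x : ℝ) : f x = f 0 + c * x := by
  have hg : Differentiable ℝ (fun x => f x - c * x) :=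
    hf.sub (differentiable_id.const_mul c)
  have hg' : ∀ x, deriv (fun x => f x - c * x) x = 0 := by
    intro x
    have := ((hf x).hasDerivAt.sub ((hasDerivAt_id x).const_mul c)).deriv
    simp only [mul_one, id, Pi.sub_def] at this
    rw [this, h]
    ring
  have := is_const_of_deriv_eq_zero hg hg' x 0
  simp at this
  linarith

lemma deriv_const_of_deriv2_zero {f : ℝ → ℝ} (hf : ContDiff ℝ (⊤ : ℕ∞) f)
    (h : ∀ x, deriv (deriv f) x = 0) (x : ℝ) : deriv f x = deriv f 0 :=
  is_const_of_deriv_eq_zero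
    ((contDiff_infty_iff_deriv.mp (hf.of_le (by simp))).2.differentiable
      (by simp)) h x 0

lemma linear_of_deriv2_zero {f : ℝ → ℝ} (hf : ContDiff ℝ (⊤ : ℕ∞) f)
    (h : ∀ x, deriv (deriv f) x = 0) (x : ℝ) : f x = f 0 + deriv f 0 * x :=
  linear_of_deriv_const (hf.differentiable (by simp))
    (deriv_const_of_deriv2_zero hf h) x

/-- Eq. (4.10): the Lie point symmetry algebra of the Toda lattice
`üₙ = exp(uₙ₋₁ − uₙ) − exp(uₙ − uₙ₊₁)` is four-dimensional: the determining equation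
holds identically if and only if `τ(t) = c₁ + c₄ t` and `φₙ(t,u) = c₂t + c₃ + 2c₄n`,
i.e. the symmetries are spanned by `X₁ = ∂_t`, `X₂ = t∂_{uₙ}`, `X₃ = ∂_{uₙ}`,
`X₄ = t∂_t + 2n∂_{uₙ}`. -/
theorem toda_symmetry_algebra
    (τ : ℝ → ℝ) (φ : ℤ → ℝ → ℝ → ℝ)
    (hτ : ContDiff ℝ (⊤ : ℕ∞) τ)
    (hφ : ∀ n, ContDiff ℝ (⊤ : ℕ∞) (fun p : ℝ × ℝ => φ n p.1 p.2)) :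
    TodaDetEq τ φ ↔
      ∃ c1 c2 c3 c4 : ℝ,
        (∀ t : ℝ, τ t = c1 + c4 * t) ∧
        (∀ (n : ℤ) (t u : ℝ), φ n t u = c2 * t + c3 + 2 * c4 * (n : ℝ)) := by
  have hφu : ∀ n t, ContDiff ℝ (⊤ : ℕ∞) (fun z => φ n t z) :=
    fun n t => (hφ n).comp (contDiff_const.prodMk contDiff_id)
  have hφt : ∀ n u, ContDiff ℝ (⊤ : ℕ∞) (fun s => φ n s u) :=
    fun n u => (hφ n).comp (contDiff_id.prodMk contDiff_const)
  constructor
  · intro h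
    -- Step 1: extract the three coefficient equations in v0
    have S1 : ∀ n t u0, deriv (deriv (fun z => φ n t z)) u0 = 0 := by
      intro n t u0
      have h1 := h n t u0 u0 u0 0 0 0
      have h2 := h n t u0 u0 u0 0 1 0
      have h3 := h n t u0 u0 u0 0 (-1) 0
      simp only [sub_self, zero_mul, mul_zero, add_zero] at h1 h2 h3
      nlinarith [h1, h2, h3]
    have S2 : ∀ n t u0, 2 * deriv (fun s => deriv (fun z => φ n s z) u0) t
        = deriv (deriv τ) t := by
      intro n t u0
      have h2 := h n t u0 u0 u0 0 1 0
      have h3 := h n t u0 u0 u0 0 (-1) 0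
      simp only [sub_self, zero_mul, mul_zero, add_zero] at h2 h3
      nlinarith [h2, h3]
    have S3 : ∀ n t um u0 up,
        Real.exp (um - u0) * φ (n - 1) t um
          + (-Real.exp (um - u0) - Real.exp (u0 - up)) * φ n t u0
          + Real.exp (u0 - up) * φ (n + 1) t up
          - deriv (deriv (fun s => φ n s u0)) t
          + (2 * deriv τ t - deriv (fun z => φ n t z) u0)
            * (Real.exp (um - u0) - Real.exp (u0 - up)) = 0 := by
      intro n t um u0 up
      have h1 := h n t um u0 up 0 0 0
      rw [todaF_d1, todaF_d2, todaF_d3] at h1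
      simp only [todaF, sub_self, zero_mul, mul_zero, add_zero] at h1
      linear_combination h1
    -- Step 2: φ is affine in u
    have haff : ∀ n t z, φ n t z = φ n t 0 + deriv (fun z => φ n t z) 0 * z :=
      fun n t => linear_of_deriv2_zero (hφu n t) (S1 n t)
    have hslope : ∀ n t u, deriv (fun z => φ n t z) u = deriv (fun z => φ n t z) 0 :=
      fun n t => deriv_const_of_deriv2_zero (hφu n t) (S1 n t)
    -- Step 3: three-point argument
    have hexpL : Real.exp (Real.log 2) = 2 := Real.exp_log (by norm_num)
    have hL : Real.log 2 > 0 := Real.log_pos one_lt_two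
    have main : ∀ m t, deriv (fun z => φ m t z) 0 = 0 ∧
        (φ m t 0 - φ (m + 1) t 0 + 2 * deriv τ t - deriv (fun z => φ (m + 1) t z) 0 = 0) ∧
        (-φ (m + 1) t 0 + φ (m + 1 + 1) t 0 - deriv (deriv (fun s => φ (m + 1) s 0)) t
          - 2 * deriv τ t + deriv (fun z => φ (m + 1) t z) 0 = 0) := by
      intro m t
      have h0 := S3 (m + 1) t 0 0 0
      have h1 := S3 (m + 1) t (Real.log 2) 0 0
      have h2 := S3 (m + 1) t (Real.log 2 + Real.log 2) 0 0
      simp only [add_sub_cancel_right, sub_zero, sub_self, Real.exp_zero] at h0 h1 h2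
      rw [haff m t (Real.log 2), hexpL] at h1
      rw [haff m t (Real.log 2 + Real.log 2), Real.exp_add, hexpL] at h2
      have hbL : deriv (fun z => φ m t z) 0 * Real.log 2 = 0 := by
        linear_combination h2 / 2 - 3 / 2 * h1 + h0
      have hb0 : deriv (fun z => φ m t z) 0 = 0 := by
        rcases mul_eq_zero.mp hbL with h' | h'
        · exact h'
        · exact absurd h' (ne_of_gt hL)
      have hP : φ m t 0 - φ (m + 1) t 0 + 2 * deriv τ t
          - deriv (fun z => φ (m + 1) t z) 0 = 0 := by
        linear_combination h1 - h0 - 2 * hbL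
      refine ⟨hb0, hP, ?_⟩
      linear_combination h0 - hP
    have hb : ∀ n t u, deriv (fun z => φ n t z) u = 0 :=
      fun n t u => (hslope n t u).trans (main n t).1
    have hstep : ∀ n t, φ (n + 1) t 0 = φ n t 0 + 2 * deriv τ t := by
      intro n t
      have h1 := (main n t).2.1
      have h2 := hb (n + 1) t 0
      linarith
    have hT : ∀ n t, deriv (deriv (fun s => φ n s 0)) t = 0 := by
      intro n t
      have h1 := (main (n - 1) t).2.2
      simp only [sub_add_cancel] at h1
      have h2 := hstep n t
      have h3 := hb n t 0
      linarith
    -- Step 4: τ'' = 0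
    have hττ : ∀ t, deriv (deriv τ) t = 0 := by
      intro t
      have h1 := S2 0 t 0
      have h2 : (fun s => deriv (fun z => φ 0 s z) 0) = fun _ => (0 : ℝ) :=
        funext fun s => hb 0 s 0
      rw [h2, deriv_const'] at h1
      simpa using h1.symm
    set c4 := deriv τ 0 with hc4
    have hτ' : ∀ t, deriv τ t = c4 := fun t => deriv_const_of_deriv2_zero hτ hττ t
    have hτlin : ∀ t, τ t = τ 0 + c4 * t :=
      linear_of_deriv_const (hτ.differentiable (by simp)) hτ'
    -- Step 5: a_n(t) linear in t
    have halin : ∀ n t, φ n t 0 = φ n 0 0 + deriv (fun s => φ n s 0) 0 * t :=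
      fun n => linear_of_deriv2_zero (hφt n 0) (hT n)
    -- Step 6: index dependence
    have hstep' : ∀ n t, φ (n + 1) t 0 = φ n t 0 + 2 * c4 := by
      intro n t; rw [hstep n t, hτ' t]
    have hind : ∀ n : ℤ, ∀ t, φ n t 0 = φ 0 t 0 + 2 * c4 * (n : ℝ) := by
      intro n
      induction n using Int.induction_on with
      | zero => intro t; push_cast; ring
      | succ k ih =>
          intro t
          rw [hstep' k t, ih t]
          push_cast
          ring
      | pred k ih =>
          intro t
          have h1 := hstep' (-(k : ℤ) - 1) t
          simp only [sub_add_cancel] at h1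
          rw [ih t] at h1
          push_cast at h1 ⊢
          linarith
    refine ⟨τ 0, deriv (fun s => φ 0 s 0) 0, φ 0 0 0, c4, hτlin, ?_⟩
    intro n t u
    rw [haff n t u, hb n t 0, hind n t, halin 0 t]
    ring
  · rintro ⟨c1, c2, c3, c4, hτe, hφe⟩
    have hτfun : τ = fun t => c1 + c4 * t := funext hτe
    have hdτ : ∀ t, deriv τ t = c4 := by
      intro t
      rw [hτfun]
      simpa using (((hasDerivAt_id t).const_mul c4).const_add c1).deriv
    have hddτ : ∀ t, deriv (deriv τ) t = 0 := by
      intro t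
      have : deriv τ = fun _ => c4 := funext hdτ
      rw [this, deriv_const']
    have hφufun : ∀ n t, (fun z => φ n t z) = fun _ => c2 * t + c3 + 2 * c4 * (n : ℝ) :=
      fun n t => funext fun z => hφe n t z
    have hdu : ∀ n t u, deriv (fun z => φ n t z) u = 0 := by
      intro n t u; rw [hφufun n t]; simp
    have hddu : ∀ n t u, deriv (deriv (fun z => φ n t z)) u = 0 := by
      intro n t u; rw [hφufun n t]; simp
    have hdt : ∀ n u t, deriv (fun s => φ n s u) t = c2 := by
      intro n u t
      have : (fun s => φ n s u) = fun s => c2 * s + (c3 + 2 * c4 * (n : ℝ)) := by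
        funext s; rw [hφe]; ring
      rw [this]
      simpa using (((hasDerivAt_id t).const_mul c2).add_const (c3 + 2 * c4 * (n : ℝ))).deriv
    have hddt : ∀ n u t, deriv (deriv (fun s => φ n s u)) t = 0 := by
      intro n u t
      have : deriv (fun s => φ n s u) = fun _ => c2 := funext (hdt n u)
      rw [this, deriv_const']
    have hdtu : ∀ n u t, deriv (fun s => deriv (fun z => φ n s z) u) t = 0 := by
      intro n u t
      have : (fun s => deriv (fun z => φ n s z) u) = fun _ => (0 : ℝ) :=
        funext fun s => hdu n s u
      rw [this, deriv_const']
    intro n t um u0 up vm v0 vp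
    rw [todaF_d1, todaF_d2, todaF_d3, hddt, hdtu, hddτ, hddu, hdτ, hdu,
      hφe (n - 1), hφe n, hφe (n + 1)]
    simp only [todaF]
    push_cast
    ring
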